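/- arXiv:0909.2586 — 4 statements merged into one kernel-verified Lean document; each statement's English description precedes it below -/
import Mathlib

section
/- For all a ∈ (0,1) and all (x_n)_{n≥1} ∈ ℓ²: if ℙ(|Σ_{n≥1} r_n x_n| > a) ≤ (1 - a²)²/3, then Σ_{n≥1} x_n² ≤ 1. -/
/-!
Suppose `σ = ∑ x_n² > 1`. The partial sums `S_N = ∑_{n<N} r_n x_n` satisfy `𝔼 S_N² = σ_N` and
`𝔼 S_N⁴ ≤ 3 σ_N²` (independence kills every odd term when a summand is added), so the
Paley–Zygmund inequality applied to `S_N²` gives `ℙ(|S_N| > b) ≥ (σ_N - b²)² / (3 σ_N²)`.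
As `S_N → ξ` almost surely, hence in probability, this lower bound passes in the limit to
`ℙ(|ξ| > a)` for any `a < b`. Choosing `a < b` with `b² < a² σ` makes the limit
`(1 - b²/σ)² / 3` strictly larger than `(1 - a²)² / 3`.
-/

open MeasureTheory ProbabilityTheory ENNReal

/-- A Rademacher sequence: independent random variables taking the values `1` and `-1`,
each with probability `1/2`. -/
def IsRademacherSeq {Ω : Type*} [MeasurableSpace Ω] (P : Measure Ω) (r : ℕ → Ω → ℝ) : Prop :=
  (∀ n, Measurable (r n)) ∧
  iIndepFun r P ∧
  (∀ n, P {ω | r n ω = 1} = 1/2 ∧ P {ω | r n ω = -1} = 1/2)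

open Filter Topology

section
variable {Ω : Type*} [MeasurableSpace Ω] {P : Measure Ω}

lemma le_measure_abs_gt_of_tendstoInMeasure {ι : Type*} {l : Filter ι} [l.NeBot]
    {Z : ι → Ω → ℝ} {ξ : Ω → ℝ} (hZ : TendstoInMeasure P Z l ξ) {a b : ℝ} (hab : a < b)
    {f : ι → ℝ≥0∞} {L : ℝ≥0∞} (hf : Tendsto f l (𝓝 L))
    (hfZ : ∀ᶠ i in l, f i ≤ P {ω | b < |Z i ω|}) :
    L ≤ P {ω | a < |ξ ω|} := by
  have hsplit (i : ι) : P {ω | b < |Z i ω|}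
      ≤ P {ω | a < |ξ ω|} + P {ω | b - a ≤ dist (Z i ω) (ξ ω)} := by
    refine (measure_mono fun ω (hω : b < |Z i ω|) => ?_).trans (measure_union_le _ _)
    by_cases hξω : a < |ξ ω|
    · exact Or.inl hξω
    · have := abs_sub_abs_le_abs_sub (Z i ω) (ξ ω)
      exact Or.inr (show b - a ≤ |Z i ω - ξ ω| by linarith [not_lt.1 hξω])
  have hlim : Tendsto (fun i => P {ω | a < |ξ ω|} + P {ω | b - a ≤ dist (Z i ω) (ξ ω)}) l
      (𝓝 (P {ω | a < |ξ ω|})) := by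
    simpa using tendsto_const_nhds.add (tendstoInMeasure_iff_dist.1 hZ _ (sub_pos.2 hab))
  exact le_of_tendsto_of_tendsto hf hlim (hfZ.mono fun i hi => hi.trans (hsplit i))

lemma integral_comp_mul_eq_zero_of_indepFun {S g : Ω → ℝ} (hS : AEStronglyMeasurable S P)
    (hg : AEStronglyMeasurable g P) (hSg : IndepFun S g P) (hg0 : ∫ ω, g ω ∂P = 0)
    {φ : ℝ → ℝ} (hφ : Measurable φ) : ∫ ω, φ (S ω) * g ω ∂P = 0 := by
  simpa [hg0] using (hSg.comp hφ measurable_id).integral_fun_mul_eq_mul_integral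
    (hφ.comp_aemeasurable hS.aemeasurable).aestronglyMeasurable hg

variable [IsProbabilityMeasure P]

lemma integrable_pow_of_ae_abs_le {S : Ω → ℝ} {C : ℝ} (hS : AEStronglyMeasurable S P)
    (hSC : ∀ᵐ ω ∂P, |S ω| ≤ C) (k : ℕ) : Integrable (fun ω => S ω ^ k) P :=
  .of_bound (hS.pow k) (C ^ k) (hSC.mono fun ω h => by
    simpa [abs_pow] using pow_le_pow_left₀ (abs_nonneg _) h k)

lemma integral_add_sq_of_indepFun {S g : Ω → ℝ} {C c : ℝ} (hS : AEStronglyMeasurable S P)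
    (hSC : ∀ᵐ ω ∂P, |S ω| ≤ C) (hg : AEStronglyMeasurable g P) (hSg : IndepFun S g P)
    (hg0 : ∫ ω, g ω ∂P = 0) (hgc : ∀ᵐ ω ∂P, g ω ^ 2 = c ^ 2) :
    ∫ ω, (S ω + g ω) ^ 2 ∂P = ∫ ω, S ω ^ 2 ∂P + c ^ 2 := by
  have hexp : (fun ω => (S ω + g ω) ^ 2) =ᵐ[P] fun ω => (S ω ^ 2 + c ^ 2) + 2 * S ω * g ω := by
    filter_upwards [hgc] with ω h
    linear_combination h
  have hg_le : ∀ᵐ ω ∂P, ‖g ω‖ ≤ |c| :=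
    hgc.mono fun ω h => ((sq_eq_sq_iff_abs_eq_abs _ _).1 h).le
  have hpow := integrable_pow_of_ae_abs_le hS hSC
  have hodd : Integrable (fun ω => 2 * S ω * g ω) P :=
    (by simpa using (hpow 1).const_mul 2 : Integrable (fun ω => 2 * S ω) P).mul_bdd hg hg_le
  rw [integral_congr_ae hexp, integral_add (by fun_prop) hodd,
    integral_add (hpow 2) (integrable_const _),
    integral_comp_mul_eq_zero_of_indepFun hS hg hSg hg0 (φ := fun y => 2 * y) (by fun_prop)]
  simp

lemma integral_add_pow_four_of_indepFun {S g : Ω → ℝ} {C c : ℝ} (hS : AEStronglyMeasurable S P)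
    (hSC : ∀ᵐ ω ∂P, |S ω| ≤ C) (hg : AEStronglyMeasurable g P) (hSg : IndepFun S g P)
    (hg0 : ∫ ω, g ω ∂P = 0) (hgc : ∀ᵐ ω ∂P, g ω ^ 2 = c ^ 2) :
    ∫ ω, (S ω + g ω) ^ 4 ∂P = ∫ ω, S ω ^ 4 ∂P + 6 * c ^ 2 * ∫ ω, S ω ^ 2 ∂P + c ^ 4 := by
  have hexp : (fun ω => (S ω + g ω) ^ 4) =ᵐ[P] fun ω =>
      (S ω ^ 4 + 6 * c ^ 2 * S ω ^ 2 + c ^ 4) + (4 * S ω ^ 3 + 4 * c ^ 2 * S ω) * g ω := by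
    filter_upwards [hgc] with ω h
    linear_combination (6 * S ω ^ 2 + 4 * S ω * g ω + g ω ^ 2 + c ^ 2) * h
  have hg_le : ∀ᵐ ω ∂P, ‖g ω‖ ≤ |c| :=
    hgc.mono fun ω h => ((sq_eq_sq_iff_abs_eq_abs _ _).1 h).le
  have hpow := integrable_pow_of_ae_abs_le hS hSC
  have hodd : Integrable (fun ω => (4 * S ω ^ 3 + 4 * c ^ 2 * S ω) * g ω) P := by
    have hS1 : Integrable S P := by simpa using hpow 1
    have hS3 := hpow 3
    exact (by fun_prop : Integrable (fun ω => 4 * S ω ^ 3 + 4 * c ^ 2 * S ω) P).mul_bdd hg hg_le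
  rw [integral_congr_ae hexp,
    integral_add (by fun_prop) hodd, integral_add (by fun_prop) (integrable_const _),
    integral_add (hpow 4) ((hpow 2).const_mul _), integral_const_mul,
    integral_comp_mul_eq_zero_of_indepFun hS hg hSg hg0
      (φ := fun y => 4 * y ^ 3 + 4 * c ^ 2 * y) (by fun_prop)]
  simp

lemma integral_mul_indicator_le_sqrt_mul_sqrt {Y : Ω → ℝ} (hY0 : 0 ≤ᵐ[P] Y) (hY : MemLp Y 2 P)
    {A : Set Ω} (hA : NullMeasurableSet A P) :
    ∫ ω, Y ω * A.indicator 1 ω ∂P ≤ √(∫ ω, Y ω ^ 2 ∂P) * √(P.real A) := by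
  have hχ_le (ω : Ω) : ‖A.indicator (1 : Ω → ℝ) ω‖ ≤ 1 := by
    by_cases hω : ω ∈ A <;> simp [hω]
  have hχ : MemLp (A.indicator (1 : Ω → ℝ)) 2 P :=
    (memLp_top_of_bound (aemeasurable_one.indicator₀ hA).aestronglyMeasurable 1
      (Eventually.of_forall hχ_le)).mono_exponent le_top
  have hχ2 : ∫ ω, A.indicator (1 : Ω → ℝ) ω ^ 2 ∂P = P.real A := by
    have hsq (ω : Ω) : A.indicator (1 : Ω → ℝ) ω ^ 2 = A.indicator 1 ω := by
      by_cases hω : ω ∈ A <;> simp [hω]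
    simp_rw [hsq, integral_indicator₀ hA, Pi.one_apply, setIntegral_const, smul_eq_mul, mul_one]
  have hCS := integral_mul_le_Lp_mul_Lq_of_nonneg (g := A.indicator 1)
    Real.HolderConjugate.two_two hY0
    (Eventually.of_forall fun ω => Set.indicator_nonneg (fun _ _ => zero_le_one) ω)
    (by simpa using hY) (by rwa [ofReal_ofNat])
  simp_rw [Real.rpow_two] at hCS
  rwa [hχ2, ← Real.sqrt_eq_rpow, ← Real.sqrt_eq_rpow] at hCS

/-- The Paley–Zygmund inequality. -/
lemma sq_integral_sub_le_integral_sq_mul_measureReal_gt {Y : Ω → ℝ} (hY0 : 0 ≤ᵐ[P] Y)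
    (hY : MemLp Y 2 P) {t : ℝ} (ht : 0 ≤ t) (htY : t ≤ ∫ ω, Y ω ∂P) :
    (∫ ω, Y ω ∂P - t) ^ 2 ≤ (∫ ω, Y ω ^ 2 ∂P) * P.real {ω | t < Y ω} := by
  set A := {ω | t < Y ω}
  have hA : NullMeasurableSet A P := nullMeasurableSet_lt aemeasurable_const hY.aemeasurable
  have hY1 : Integrable Y P := hY.integrable one_le_two
  have hYA : Integrable (fun ω => Y ω * A.indicator 1 ω) P :=
    hY1.mul_bdd (c := 1) (aemeasurable_one.indicator₀ hA).aestronglyMeasurable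
      (Eventually.of_forall fun ω => by by_cases hω : ω ∈ A <;> simp [hω])
  have hsplit : ∫ ω, Y ω ∂P ≤ ∫ ω, Y ω * A.indicator 1 ω ∂P + t := by
    have hpt (ω : Ω) : Y ω ≤ Y ω * A.indicator 1 ω + t := by
      by_cases hω : ω ∈ A
      · simp [hω, ht]
      · simpa [hω] using not_lt.1 hω
    simpa [integral_add hYA (integrable_const t)] using
      integral_mono hY1 (hYA.add (integrable_const t)) hpt
  calc (∫ ω, Y ω ∂P - t) ^ 2 ≤ (√(∫ ω, Y ω ^ 2 ∂P) * √(P.real A)) ^ 2 :=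
        pow_le_pow_left₀ (sub_nonneg.2 htY)
          (by linarith [integral_mul_indicator_le_sqrt_mul_sqrt hY0 hY hA]) 2
    _ = (∫ ω, Y ω ^ 2 ∂P) * P.real A := by
        rw [mul_pow, Real.sq_sqrt (integral_nonneg fun ω => sq_nonneg _),
          Real.sq_sqrt measureReal_nonneg]

end

namespace IsRademacherSeq

variable {Ω : Type*} [MeasurableSpace Ω] {P : Measure Ω} {r : ℕ → Ω → ℝ}

lemma measurable_sum (hr : IsRademacherSeq P r) (x : ℕ → ℝ) (s : Finset ℕ) :
    Measurable fun ω => ∑ n ∈ s, r n ω * x n :=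
  Finset.measurable_sum s fun n _ => (hr.1 n).mul_const _

lemma indepFun_sum (hr : IsRademacherSeq P r) (x : ℕ → ℝ) {s : Finset ℕ} {m : ℕ}
    (hm : m ∉ s) : IndepFun (fun ω => ∑ n ∈ s, r n ω * x n) (fun ω => r m ω * x m) P := by
  have := (hr.2.1.comp (fun n y => y * x n) fun n => measurable_mul_const _)
    |>.indepFun_finsetSum_of_notMem (fun n => (hr.1 n).mul_const _) hm
  have hsum : (fun ω => ∑ n ∈ s, r n ω * x n) = ∑ n ∈ s, (fun y => y * x n) ∘ r n := by
    ext ω; simp [Finset.sum_apply]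
  rwa [hsum]

variable [IsProbabilityMeasure P]

lemma ae_eq_one_or_eq_neg_one (hr : IsRademacherSeq P r) (n : ℕ) :
    ∀ᵐ ω ∂P, r n ω = 1 ∨ r n ω = -1 := by
  have hdisj : Disjoint {ω | r n ω = 1} {ω | r n ω = -1} :=
    Set.disjoint_left.2 fun ω (h1 : r n ω = 1) (h2 : r n ω = -1) => by linarith
  have hm (c : ℝ) : MeasurableSet {ω | r n ω = c} := hr.1 n (measurableSet_singleton c)
  have hunion : P ({ω | r n ω = 1} ∪ {ω | r n ω = -1}) = 1 := by
    rw [measure_union hdisj (hm (-1)), (hr.2.2 n).1, (hr.2.2 n).2, ENNReal.add_halves]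
  exact ae_iff.2 ((prob_compl_eq_zero_iff ((hm 1).union (hm (-1)))).2 hunion)

lemma integral_eq_zero (hr : IsRademacherSeq P r) (n : ℕ) : ∫ ω, r n ω ∂P = 0 := by
  have hm (c : ℝ) : MeasurableSet {ω | r n ω = c} := hr.1 n (measurableSet_singleton c)
  have hae : r n =ᵐ[P] fun ω =>
      {ω | r n ω = 1}.indicator 1 ω - {ω | r n ω = -1}.indicator 1 ω := by
    filter_upwards [hr.ae_eq_one_or_eq_neg_one n] with ω h
    rcases h with h | h <;> norm_num [Set.indicator_apply, h]
  rw [integral_congr_ae hae, integral_sub ((integrable_const 1).indicator (hm 1))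
    ((integrable_const 1).indicator (hm (-1))), integral_indicator_one (hm 1),
    integral_indicator_one (hm (-1)), measureReal_def, measureReal_def, (hr.2.2 n).1,
    (hr.2.2 n).2, sub_self]

lemma integral_mul_const_eq_zero (hr : IsRademacherSeq P r) (n : ℕ) (c : ℝ) :
    ∫ ω, r n ω * c ∂P = 0 := by
  rw [integral_mul_const, hr.integral_eq_zero, zero_mul]

lemma ae_mul_const_sq_eq (hr : IsRademacherSeq P r) (n : ℕ) (c : ℝ) :
    ∀ᵐ ω ∂P, (r n ω * c) ^ 2 = c ^ 2 :=
  (hr.ae_eq_one_or_eq_neg_one n).mono fun ω h => by rcases h with h | h <;> simp [h]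

lemma ae_abs_sum_le (hr : IsRademacherSeq P r) (x : ℕ → ℝ) (s : Finset ℕ) :
    ∀ᵐ ω ∂P, |∑ n ∈ s, r n ω * x n| ≤ ∑ n ∈ s, |x n| := by
  filter_upwards [ae_all_iff.2 hr.ae_eq_one_or_eq_neg_one] with ω hω
  refine (Finset.abs_sum_le_sum_abs _ _).trans (Finset.sum_le_sum fun n _ => ?_)
  rcases hω n with h | h <;> simp [h]

lemma integral_sum_sq (hr : IsRademacherSeq P r) (x : ℕ → ℝ) (s : Finset ℕ) :
    ∫ ω, (∑ n ∈ s, r n ω * x n) ^ 2 ∂P = ∑ n ∈ s, x n ^ 2 := by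
  classical
  induction s using Finset.induction_on with
  | empty => simp
  | insert m s hm ih =>
    simp_rw [Finset.sum_insert hm, add_comm (r m _ * x m)]
    rw [integral_add_sq_of_indepFun (hr.measurable_sum x s).aestronglyMeasurable
      (hr.ae_abs_sum_le x s) ((hr.1 m).mul_const _).aestronglyMeasurable (hr.indepFun_sum x hm)
      (hr.integral_mul_const_eq_zero m _) (hr.ae_mul_const_sq_eq m _), ih, add_comm]

lemma integral_sum_pow_four_le (hr : IsRademacherSeq P r) (x : ℕ → ℝ) (s : Finset ℕ) :
    ∫ ω, (∑ n ∈ s, r n ω * x n) ^ 4 ∂P ≤ 3 * (∑ n ∈ s, x n ^ 2) ^ 2 := by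
  classical
  induction s using Finset.induction_on with
  | empty => simp
  | insert m s hm ih =>
    simp_rw [Finset.sum_insert hm, add_comm (r m _ * x m)]
    rw [integral_add_pow_four_of_indepFun (hr.measurable_sum x s).aestronglyMeasurable
      (hr.ae_abs_sum_le x s) ((hr.1 m).mul_const _).aestronglyMeasurable (hr.indepFun_sum x hm)
      (hr.integral_mul_const_eq_zero m _) (hr.ae_mul_const_sq_eq m _), hr.integral_sum_sq]
    nlinarith [pow_nonneg (sq_nonneg (x m)) 2]

lemma sq_sub_div_le_measureReal_abs_sum_gt (hr : IsRademacherSeq P r) (x : ℕ → ℝ)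
    (s : Finset ℕ) {b : ℝ} (hb : 0 ≤ b) (hbs : b ^ 2 ≤ ∑ n ∈ s, x n ^ 2) :
    (∑ n ∈ s, x n ^ 2 - b ^ 2) ^ 2 / (3 * (∑ n ∈ s, x n ^ 2) ^ 2)
      ≤ P.real {ω | b < |∑ n ∈ s, r n ω * x n|} := by
  set S := fun ω => ∑ n ∈ s, r n ω * x n
  have hset : {ω | b < |S ω|} = {ω | b ^ 2 < S ω ^ 2} := by
    ext ω; simp [sq_lt_sq, abs_of_nonneg hb]
  have hS2 : MemLp (fun ω => S ω ^ 2) 2 P :=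
    (memLp_top_of_bound ((hr.measurable_sum x s).pow_const 2).aestronglyMeasurable _
      ((hr.ae_abs_sum_le x s).mono fun ω h => by
        simpa [abs_pow] using pow_le_pow_left₀ (abs_nonneg _) h 2)).mono_exponent le_top
  have hS_sq : ∫ ω, S ω ^ 2 ∂P = ∑ n ∈ s, x n ^ 2 := hr.integral_sum_sq x s
  have hPZ := sq_integral_sub_le_integral_sq_mul_measureReal_gt
    (Eventually.of_forall fun ω => sq_nonneg (S ω)) hS2 (sq_nonneg b) (hS_sq ▸ hbs)
  rw [hS_sq] at hPZ
  rw [hset]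
  refine div_le_of_le_mul₀ (by positivity) measureReal_nonneg ?_
  calc _ ≤ (∫ ω, S ω ^ 4 ∂P) * P.real {ω | b ^ 2 < S ω ^ 2} := by simpa [← pow_mul] using hPZ
    _ ≤ 3 * (∑ n ∈ s, x n ^ 2) ^ 2 * P.real {ω | b ^ 2 < S ω ^ 2} := by
      gcongr; exact hr.integral_sum_pow_four_le x s
    _ = _ := mul_comm _ _

end IsRademacherSeq

lemma exists_gt_sq_lt_sq_mul {a σ : ℝ} (ha : 0 < a) (hσ : 1 < σ) :
    ∃ b, a < b ∧ b ^ 2 < a ^ 2 * σ := by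
  have ha2 : 0 < a ^ 2 := by positivity
  refine ⟨√(a ^ 2 * ((1 + σ) / 2)), (Real.lt_sqrt ha.le).2 (by nlinarith), ?_⟩
  rw [Real.sq_sqrt (by nlinarith)]
  nlinarith

/-- `L⁰`-version of Khintchine's inequality: for `a ∈ (0,1)`, if
`ℙ(|∑ r_n x_n| > a) ≤ (1 - a²)²/3` then `∑ x_n² ≤ 1`. -/
theorem khintchine_L0
    {Ω : Type*} [MeasurableSpace Ω] (P : Measure Ω) [IsProbabilityMeasure P]
    (r : ℕ → Ω → ℝ) (hr : IsRademacherSeq P r)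
    (a : ℝ) (ha : a ∈ Set.Ioo (0:ℝ) 1)
    (x : ℕ → ℝ) (hx : Summable (fun n => x n ^ 2))
    (ξ : Ω → ℝ) (hξ : ∀ᵐ ω ∂P, HasSum (fun n => r n ω * x n) (ξ ω))
    (h : P {ω | |ξ ω| > a} ≤ ENNReal.ofReal ((1 - a ^ 2) ^ 2 / 3)) :
    ∑' n, x n ^ 2 ≤ 1 := by
  obtain ⟨ha0, ha1⟩ := ha
  set σ := ∑' n, x n ^ 2
  by_contra! hσ1
  have hσ0 : 0 < σ := one_pos.trans hσ1
  obtain ⟨b, hab, hb2⟩ := exists_gt_sq_lt_sq_mul ha0 hσ1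
  have hpartial : Tendsto (fun N => ∑ n ∈ Finset.range N, x n ^ 2) atTop (𝓝 σ) :=
    hx.hasSum.tendsto_sum_nat
  have hS : TendstoInMeasure P (fun N ω => ∑ n ∈ Finset.range N, r n ω * x n) atTop ξ :=
    tendstoInMeasure_of_tendsto_ae (fun N => (hr.measurable_sum x _).aestronglyMeasurable)
      (hξ.mono fun ω h => h.tendsto_sum_nat)
  -- The Paley–Zygmund lower bound for `ℙ(|S_N| > b)` and its limit as `N → ∞`.
  have hbound := ENNReal.tendsto_ofReal (((hpartial.sub_const (b ^ 2)).pow 2).div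
    ((hpartial.pow 2).const_mul 3) (by positivity))
  have hev := (hpartial.eventually (eventually_gt_nhds (hb2.trans_le
    (mul_le_of_le_one_left hσ0.le (by nlinarith))))).mono fun N hN =>
      ENNReal.ofReal_le_of_le_toReal
        (hr.sq_sub_div_le_measureReal_abs_sum_gt x _ (ha0.trans hab).le hN.le)
  have hle := (le_measure_abs_gt_of_tendstoInMeasure hS hab hbound hev).trans h
  rw [ENNReal.ofReal_le_ofReal_iff (by positivity),
    div_le_div_iff₀ (by positivity) (by norm_num)] at hle
  have hgap : (σ * (1 - a ^ 2)) ^ 2 < (σ - b ^ 2) ^ 2 :=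
    pow_lt_pow_left₀ (by nlinarith) (mul_pos hσ0 (by nlinarith)).le two_ne_zero
  nlinarith
end

section
/- Let η = Σ_{n≥1} r_n x_n with 0 < Σ_{n≥1} x_n² < ∞. Then ℙ(η = 0) ≤ 1 − 2 e^{−2+γ} (≈ 0.517), where γ is Euler's constant. -/
open MeasureTheory ProbabilityTheory ENNReal

/-! In fact `ℙ(η = 0) ≤ 1/2`, which is stronger: `γ < H₁₆ - log 16 < 2 - 2 log 2`, so
`2 e^{-2+γ} < 1/2`. Pick `i` with `x i ≠ 0` and write `η = r_i x_i + ξ`, where `ξ` is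
independent of `r_i`. On `{η = 0}` either `r_i = 1` and `ξ = -x_i`, or `r_i = -1` and `ξ = x_i`,
so `ℙ(η = 0) ≤ (ℙ(ξ = -x_i) + ℙ(ξ = x_i)) / 2 ≤ 1/2`. -/

open Filter Finset Function

lemma eulerMascheroniConstant_lt_two_sub_two_mul_log_two :
    Real.eulerMascheroniConstant < 2 - 2 * Real.log 2 := by
  have hH : (harmonic 16 : ℝ) < 3386 / 1000 := by
    have h : harmonic 16 < 3386 / 1000 := by norm_num [harmonic, sum_range_succ]
    simpa using (Rat.cast_lt (K := ℝ)).2 h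
  have hlog : Real.log (16 : ℕ) = 4 * Real.log 2 := by
    rw [show ((16 : ℕ) : ℝ) = 2 ^ 4 by norm_num, Real.log_pow]; norm_num
  have hγ := Real.eulerMascheroniConstant_lt_eulerMascheroniSeq' 16
  rw [Real.eulerMascheroniSeq', if_neg (by norm_num), hlog] at hγ
  linarith [Real.log_two_gt_d9]

lemma exp_neg_two_add_eulerMascheroniConstant_lt :
    Real.exp (-2 + Real.eulerMascheroniConstant) < 1 / 4 := by
  calc Real.exp (-2 + Real.eulerMascheroniConstant) < Real.exp (-(2 * Real.log 2)) := by
        gcongr; linarith [eulerMascheroniConstant_lt_two_sub_two_mul_log_two]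
    _ = 1 / 4 := by
        rw [Real.exp_neg, ← Real.log_rpow two_pos, Real.exp_log (by positivity)]; norm_num

namespace ProbabilityTheory

variable {Ω : Type*} {mΩ : MeasurableSpace Ω} {P : Measure Ω}

lemma ae_eq_one_or_eq_neg_one [IsProbabilityMeasure P] {ε : Ω → ℝ} (hε : Measurable ε)
    (h₁ : P (ε ⁻¹' {1}) = 1 / 2) (h₂ : P (ε ⁻¹' {-1}) = 1 / 2) :
    ∀ᵐ ω ∂P, ε ω = 1 ∨ ε ω = -1 := by
  have hdisj : Disjoint (ε ⁻¹' {1}) (ε ⁻¹' {-1}) :=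
    (Set.disjoint_singleton.2 (by norm_num)).preimage ε
  have hmeas := hε (measurableSet_singleton (-1 : ℝ))
  refine (ae_mem_iff_measure_eq (s := ε ⁻¹' {1} ∪ ε ⁻¹' {-1})
    ((hε (measurableSet_singleton 1)).union hmeas).nullMeasurableSet).2 ?_
  rw [measure_union hdisj hmeas, h₁, h₂, ENNReal.add_halves, measure_univ]

lemma IndepFun.measure_mul_add_eq_le_half [IsProbabilityMeasure P] {ε ξ : Ω → ℝ}
    (hε : Measurable ε) (hξ : Measurable ξ) (hind : IndepFun ε ξ P)
    (h₁ : P (ε ⁻¹' {1}) = 1 / 2) (h₂ : P (ε ⁻¹' {-1}) = 1 / 2) {c : ℝ} (hc : c ≠ 0)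
    (a : ℝ) : P {ω | ε ω * c + ξ ω = a} ≤ 1 / 2 := by
  have hcover : {ω | ε ω * c + ξ ω = a} ≤ᵐ[P]
      (ε ⁻¹' {1} ∩ ξ ⁻¹' {a - c} ∪ ε ⁻¹' {-1} ∩ ξ ⁻¹' {a + c} : Set Ω) := by
    filter_upwards [ae_eq_one_or_eq_neg_one hε h₁ h₂] with ω hω (hη : ε ω * c + ξ ω = a)
    rcases hω with h | h
    · exact Or.inl ⟨h, show ξ ω = a - c by rw [h] at hη; linarith⟩
    · exact Or.inr ⟨h, show ξ ω = a + c by rw [h] at hη; linarith⟩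
  have hdisj : Disjoint (ξ ⁻¹' {a - c}) (ξ ⁻¹' {a + c}) :=
    (Set.disjoint_singleton.2 fun h => hc (by linarith)).preimage ξ
  have hprod (s t : ℝ) : P (ε ⁻¹' {s} ∩ ξ ⁻¹' {t}) = P (ε ⁻¹' {s}) * P (ξ ⁻¹' {t}) :=
    hind.measure_inter_preimage_eq_mul _ _ (measurableSet_singleton s)
      (measurableSet_singleton t)
  calc P {ω | ε ω * c + ξ ω = a}
      ≤ P (ε ⁻¹' {1} ∩ ξ ⁻¹' {a - c}) + P (ε ⁻¹' {-1} ∩ ξ ⁻¹' {a + c}) :=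
        (measure_mono_ae hcover).trans (measure_union_le _ _)
    _ = 1 / 2 * P (ξ ⁻¹' {a - c} ∪ ξ ⁻¹' {a + c}) := by
        rw [hprod, hprod, h₁, h₂, measure_union hdisj (hξ (measurableSet_singleton _)),
          mul_add]
    _ ≤ 1 / 2 := mul_le_of_le_one_right' prob_le_one

lemma iIndepFun.indepFun_of_measurable_biSup_compl {ι β γ : Type*} [MeasurableSpace β]
    [MeasurableSpace γ] {f : ι → Ω → β} (hf : ∀ i, Measurable (f i))
    (hind : iIndepFun f P) (i : ι) {g : Ω → γ}
    (hg : Measurable[⨆ j ∈ ({i}ᶜ : Set ι), MeasurableSpace.comap (f j) ‹_›] g) :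
    IndepFun (f i) g P := by
  rw [IndepFun_iff_Indep]
  refine indep_of_indep_of_le_left (indep_of_indep_of_le_right ?_ hg.comap_le)
    (le_biSup (fun j => MeasurableSpace.comap (f j) ‹_›) (Set.mem_singleton i))
  exact indep_biSup_compl (fun j => (hf j).comap_le) hind.iIndep {i}

end ProbabilityTheory

theorem IsRademacherSeq.measure_eq_le_half {Ω : Type*} [MeasurableSpace Ω]
    {P : Measure Ω} [IsProbabilityMeasure P] {r : ℕ → Ω → ℝ} (hr : IsRademacherSeq P r)
    {x : ℕ → ℝ} {i : ℕ} (hxi : x i ≠ 0) {η : Ω → ℝ}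
    (hη : ∀ᵐ ω ∂P, HasSum (fun n => r n ω * x n) (η ω)) (a : ℝ) :
    P {ω | η ω = a} ≤ 1 / 2 := by
  obtain ⟨hmeas, hind, hval⟩ := hr
  let 𝓕 := ⨆ n ∈ ({i}ᶜ : Set ℕ), MeasurableSpace.comap (r n) inferInstance
  -- The series without its `i`-th term, summed as a `limsup` of partial sums so that it is
  -- `𝓕`-measurable everywhere, not only where the series converges.
  set ξ : Ω → ℝ := fun ω =>
    limsup (fun N => ∑ n ∈ range N, update (fun n => r n ω * x n) i 0 n) atTop
  have hξ : Measurable[𝓕] ξ := by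
    refine Measurable.limsup fun N => Finset.measurable_sum _ fun n _ => ?_
    rcases eq_or_ne n i with rfl | hn
    · simp
    · simp only [update_of_ne hn]
      exact ((comap_measurable (r n)).mono (le_biSup (fun j => MeasurableSpace.comap (r j) _)
        (Set.mem_compl_singleton_iff.2 hn)) le_rfl).mul_const _
  have hη_eq : η =ᵐ[P] fun ω => r i ω * x i + ξ ω := by
    filter_upwards [hη] with ω hω
    have hξω : ξ ω = 0 - r i ω * x i + η ω := (hω.update i 0).tendsto_sum_nat.limsup_eq
    rw [hξω]
    ring
  calc P {ω | η ω = a} = P {ω | r i ω * x i + ξ ω = a} :=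
        measure_congr (hη_eq.fun_comp (· = a))
    _ ≤ 1 / 2 := IndepFun.measure_mul_add_eq_le_half (hmeas i)
        (hξ.mono (iSup₂_le fun n _ => (hmeas n).comap_le) le_rfl)
        (hind.indepFun_of_measurable_biSup_compl hmeas i hξ) (hval i).1 (hval i).2 hxi a

theorem rademacher_sum_zero_prob_le_general
    {Ω : Type*} [MeasurableSpace Ω] (P : Measure Ω) [IsProbabilityMeasure P]
    (r : ℕ → Ω → ℝ) (hr : IsRademacherSeq P r)
    (x : ℕ → ℝ) (hx0 : 0 < ∑' n, x n ^ 2)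
    (η : Ω → ℝ) (hη : ∀ᵐ ω ∂P, HasSum (fun n => r n ω * x n) (η ω)) :
    P {ω | η ω = 0} ≤
      ENNReal.ofReal (1 - 2 * Real.exp (-2 + Real.eulerMascheroniConstant)) := by
  obtain ⟨i, hxi⟩ : ∃ i, x i ≠ 0 := by
    by_contra! h
    simp [h] at hx0
  calc P {ω | η ω = 0} ≤ 1 / 2 := hr.measure_eq_le_half hxi hη 0
    _ = ENNReal.ofReal (1 / 2) := by
        rw [ENNReal.ofReal_div_of_pos two_pos, ENNReal.ofReal_one, ENNReal.ofReal_ofNat]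
    _ ≤ _ := ENNReal.ofReal_le_ofReal
        (by linarith [exp_neg_two_add_eulerMascheroniConstant_lt])

/-- A nonzero Rademacher sum `η = ∑ r_n x_n` satisfies
`ℙ(η = 0) ≤ 1 - 2 e^{-2+γ}`, where `γ` is the Euler–Mascheroni constant. -/
theorem rademacher_sum_zero_prob_le
    {Ω : Type*} [MeasurableSpace Ω] (P : Measure Ω) [IsProbabilityMeasure P]
    (r : ℕ → Ω → ℝ) (hr : IsRademacherSeq P r)
    (x : ℕ → ℝ) (hx : Summable (fun n => x n ^ 2)) (hx0 : 0 < ∑' n, x n ^ 2)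
    (η : Ω → ℝ) (hη : ∀ᵐ ω ∂P, HasSum (fun n => r n ω * x n) (η ω)) :
    P {ω | η ω = 0} ≤
      ENNReal.ofReal (1 - 2 * Real.exp (-2 + Real.eulerMascheroniConstant)) :=
  rademacher_sum_zero_prob_le_general P r hr x hx0 η hη
end

section
/- The condition ℙ(w ≠ 0) > 1 − 2 e^{−2+γ} in the weighted Khintchine inequality is close to optimal: let w = 1_{\{r₁ + r₂ ≠ 0\}} and ξ = r₁ − r₂. Then ℙ(w ≠ 0) = 1/2, Σ_{n} x_n² = 2 > 0, but w ξ = 0 almost surely; in particular ‖w ξ‖_p = 0 for every p > 0, so no inequality of the form C⁻¹ (Σ_n x_n²)^{1/2} ≤ ‖w ξ‖_p can hold. -/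
open MeasureTheory ProbabilityTheory ENNReal

structure IsRademacher {Ω : Type*} [MeasurableSpace Ω] (P : Measure Ω) (X : Ω → ℝ) : Prop where
  measurable : Measurable X
  measure_eq_one : P {ω | X ω = 1} = 1/2
  measure_eq_neg_one : P {ω | X ω = -1} = 1/2

theorem IsRademacherSeq.isRademacher {Ω : Type*} [MeasurableSpace Ω] {P : Measure Ω}
    {r : ℕ → Ω → ℝ} (hr : IsRademacherSeq P r) (n : ℕ) : IsRademacher P (r n) :=
  ⟨hr.1 n, (hr.2.2 n).1, (hr.2.2 n).2⟩

theorem ProbabilityTheory.IndepFun.measure_inter_eq_eq_mul {Ω : Type*} [MeasurableSpace Ω]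
    {P : Measure Ω} {X Y : Ω → ℝ} (hXY : IndepFun X Y P) (a b : ℝ) :
    P ({ω | X ω = a} ∩ {ω | Y ω = b}) = P {ω | X ω = a} * P {ω | Y ω = b} :=
  hXY.measure_inter_preimage_eq_mul {a} {b} (measurableSet_singleton a) (measurableSet_singleton b)

namespace IsRademacher

variable {Ω : Type*} [MeasurableSpace Ω] {P : Measure Ω} {X Y : Ω → ℝ}

theorem measurableSet_eq (hX : IsRademacher P X) (c : ℝ) : MeasurableSet {ω | X ω = c} :=
  hX.measurable (measurableSet_singleton c)

theorem ae_eq_one_or_eq_neg_one [IsProbabilityMeasure P] (hX : IsRademacher P X) :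
    ∀ᵐ ω ∂P, X ω = 1 ∨ X ω = -1 := by
  have hdisj : Disjoint {ω | X ω = 1} {ω | X ω = -1} :=
    Set.disjoint_left.2 fun ω (h1 : X ω = 1) (h2 : X ω = -1) => by linarith
  have hfull : P ({ω | X ω = 1} ∪ {ω | X ω = -1}) = 1 := by
    rw [measure_union hdisj (hX.measurableSet_eq _), hX.measure_eq_one, hX.measure_eq_neg_one,
      ENNReal.add_halves]
  exact (prob_compl_eq_zero_iff ((hX.measurableSet_eq _).union (hX.measurableSet_eq _))).2 hfull

/-- The sum of two independent Rademacher variables vanishes exactly when their signs differ. -/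
theorem measure_add_ne_zero [IsProbabilityMeasure P] (hX : IsRademacher P X)
    (hY : IsRademacher P Y) (hXY : IndepFun X Y P) :
    P {ω | X ω + Y ω ≠ 0} = 1/2 := by
  have hae : {ω | X ω + Y ω ≠ 0} =ᵐ[P]
      (({ω | X ω = 1} ∩ {ω | Y ω = 1}) ∪ ({ω | X ω = -1} ∩ {ω | Y ω = -1}) : Set Ω) := by
    filter_upwards [hX.ae_eq_one_or_eq_neg_one, hY.ae_eq_one_or_eq_neg_one] with ω hx hy
    refine propext (?_ : X ω + Y ω ≠ 0 ↔ (X ω = 1 ∧ Y ω = 1) ∨ (X ω = -1 ∧ Y ω = -1))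
    rcases hx with hx | hx <;> rcases hy with hy | hy <;> norm_num [hx, hy]
  have hdisj : Disjoint ({ω | X ω = 1} ∩ {ω | Y ω = 1}) ({ω | X ω = -1} ∩ {ω | Y ω = -1}) :=
    Set.disjoint_left.2 fun ω (h1 : X ω = 1 ∧ Y ω = 1) (h2 : X ω = -1 ∧ Y ω = -1) => by
      linarith [h1.1, h2.1]
  rw [measure_congr hae,
    measure_union hdisj ((hX.measurableSet_eq _).inter (hY.measurableSet_eq _)),
    hXY.measure_inter_eq_eq_mul, hXY.measure_inter_eq_eq_mul, hX.measure_eq_one, hY.measure_eq_one,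
    hX.measure_eq_neg_one, hY.measure_eq_neg_one, ← add_mul, ENNReal.add_halves, one_mul]

theorem indicator_add_ne_zero_mul_sub_ae_eq_zero [IsProbabilityMeasure P]
    (hX : IsRademacher P X) (hY : IsRademacher P Y) :
    (fun ω => (if X ω + Y ω ≠ 0 then 1 else 0) * (X ω - Y ω)) =ᵐ[P] fun _ => (0 : ℝ) := by
  filter_upwards [hX.ae_eq_one_or_eq_neg_one, hY.ae_eq_one_or_eq_neg_one] with ω hx hy
  rcases hx with hx | hx <;> rcases hy with hy | hy <;> norm_num [hx, hy]

end IsRademacher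

/-- Optimality example: with `w = 1_{r₀ + r₁ ≠ 0}` and `ξ = r₀ - r₁` one has
`ℙ(w ≠ 0) = 1/2` while `w ξ = 0` almost surely; in particular `‖w ξ‖_p = 0`
for every `p > 0`, so no lower weighted Khintchine inequality can hold. -/
theorem weighted_khintchine_optimality_example
    {Ω : Type*} [MeasurableSpace Ω] (P : Measure Ω) [IsProbabilityMeasure P]
    (r : ℕ → Ω → ℝ) (hr : IsRademacherSeq P r)
    (w ξ : Ω → ℝ)
    (hw : w = fun ω => if r 0 ω + r 1 ω ≠ 0 then 1 else 0)
    (hξ : ξ = fun ω => r 0 ω - r 1 ω) :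
    P {ω | w ω ≠ 0} = 1/2 ∧
    (fun ω => w ω * ξ ω) =ᵐ[P] (fun _ => (0:ℝ)) ∧
    ∀ p : ℝ, 0 < p → eLpNorm (fun ω => w ω * ξ ω) (ENNReal.ofReal p) P = 0 := by
  subst hw hξ
  have hr₀ := hr.isRademacher 0
  have hr₁ := hr.isRademacher 1
  have hae := hr₀.indicator_add_ne_zero_mul_sub_ae_eq_zero hr₁
  refine ⟨?_, hae, fun p _ => by rw [eLpNorm_congr_ae hae]; exact eLpNorm_zero⟩
  simpa only [ne_eq, ite_eq_right_iff, one_ne_zero, imp_false, not_not] using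
    hr₀.measure_add_ne_zero hr₁ (hr.2.1.indepFun zero_ne_one)
end

section
/- Vector-valued version of the nonvanishing lemma: let X be a real normed space, let (x_n)_{n≥1} be a sequence in X such that η = Σ_{n≥1} r_n x_n converges almost surely and η is not almost surely zero. Then ℙ(η = 0) ≤ 1 − 2 e^{−2+γ}, where γ is Euler's constant. -/
open MeasureTheory ProbabilityTheory ENNReal

/-!
Some `x n` is nonzero. Split `∑ r_k x_k = r_n x_n + η'`, where `η'` is built from the `r_k` with
`k ≠ n` and is therefore independent of `r_n`. On `{r_n = 1}` the event `η = 0` forces `η' = -x_n`,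
on `{r_n = -1}` it forces `η' = x_n`; these are disjoint, so
`ℙ(η = 0) ≤ ½(ℙ(η' = -x_n) + ℙ(η' = x_n)) ≤ ½`. Finally `½ ≤ 1 - 2e^{-2+γ}` because
`γ < H₁₆ - log 16 < 2 - 2 log 2`.

Since `X` need not be complete or separable, `η'` is never formed: the events about it are
convergence events of partial sums, which are measurable for the σ-algebra generated by the `r_k`,
`k ≠ n`, through the `ℕ → ℝ`-valued map `ω ↦ (r_k ω)_{k ≠ n}`.
-/

open Filter Topology Finset

lemma Filter.Tendsto.sum_range_erase {X : Type*} [AddCommGroup X] [TopologicalSpace X]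
    [IsTopologicalAddGroup X] {f : ℕ → X} {a : X}
    (h : Tendsto (fun N => ∑ k ∈ range N, f k) atTop (𝓝 a)) (n : ℕ) :
    Tendsto (fun N => ∑ k ∈ (range N).erase n, f k) atTop (𝓝 (a - f n)) :=
  (h.sub_const (f n)).congr' <| (eventually_gt_atTop n).mono fun _ hN =>
    (sum_erase_eq_sub (mem_range.2 hN)).symm

lemma measurableSet_tendsto_comp_of_continuous {Ω E X : Type*} [MeasurableSpace Ω]
    [TopologicalSpace E] [MeasurableSpace E] [OpensMeasurableSpace E] [SeminormedAddCommGroup X]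
    {g : Ω → E} (hg : Measurable g) {F : ℕ → E → X} (hF : ∀ N, Continuous (F N)) (c : X) :
    MeasurableSet {ω | Tendsto (fun N => F N (g ω)) atTop (𝓝 c)} := by
  simp only [tendsto_iff_norm_sub_tendsto_zero (f := fun N => F N (g _))]
  exact measurableSet_tendsto _ fun N => (((hF N).sub continuous_const).norm.measurable).comp hg

lemma ProbabilityTheory.iIndepFun.indep_comap_biSup_compl_singleton {Ω ι : Type*}
    [MeasurableSpace Ω] {P : Measure Ω} {β : ι → Type*} [m : ∀ i, MeasurableSpace (β i)] {f : ∀ i, Ω → β i}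
    (hf : ∀ i, Measurable (f i)) (hind : iIndepFun f P) (i : ι) :
    Indep ((m i).comap (f i)) (⨆ j ∈ ({i}ᶜ : Set ι), (m j).comap (f j)) P := by
  simpa using indep_biSup_compl (fun j => (hf j).comap_le) hind {i}

lemma measure_le_half_of_indep_sign {Ω : Type*} [mΩ : MeasurableSpace Ω] {P : Measure Ω}
    [IsProbabilityMeasure P] {m' : MeasurableSpace Ω} (hm' : m' ≤ mΩ) {ε : Ω → ℝ}
    (hε : Measurable[mΩ] ε) (hind : Indep (MeasurableSpace.comap ε inferInstance) m' P)
    (hε₁ : P {ω | ε ω = 1} = 1/2) (hε₂ : P {ω | ε ω = -1} = 1/2)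
    {T B₁ B₂ : Set Ω} (hB₁ : MeasurableSet[m'] B₁) (hB₂ : MeasurableSet[m'] B₂)
    (hB : Disjoint B₁ B₂) (hT₁ : T ∩ {ω | ε ω = 1} ⊆ B₁) (hT₂ : T ∩ {ω | ε ω = -1} ⊆ B₂) :
    P T ≤ 1/2 := by
  set A₁ := {ω | ε ω = 1}
  set A₂ := {ω | ε ω = -1}
  have hA₁ : MeasurableSet[MeasurableSpace.comap ε inferInstance] A₁ :=
    ⟨{1}, measurableSet_singleton 1, rfl⟩
  have hA₂ : MeasurableSet[MeasurableSpace.comap ε inferInstance] A₂ :=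
    ⟨{-1}, measurableSet_singleton (-1), rfl⟩
  have hdisj : Disjoint A₁ A₂ := Set.disjoint_left.2 fun ω h₁ h₂ => by
    simp only [A₁, A₂, Set.mem_ofPred_eq] at h₁ h₂; linarith
  have hA₂' : MeasurableSet[mΩ] A₂ := hε.comap_le _ hA₂
  have hsign : ∀ᵐ ω ∂P, ω ∈ A₁ ∪ A₂ :=
    (ae_mem_iff_measure_eq (μ := P) (hε.comap_le _ hA₁ |>.union hA₂').nullMeasurableSet).2 <| by
      rw [measure_union hdisj hA₂', hε₁, hε₂, ENNReal.add_halves, measure_univ]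
  calc P T ≤ P (B₁ ∩ A₁ ∪ B₂ ∩ A₂) := measure_mono_ae <| hsign.mono fun ω hω hT => by
        rcases hω with h₁ | h₂
        exacts [Or.inl ⟨hT₁ ⟨hT, h₁⟩, h₁⟩, Or.inr ⟨hT₂ ⟨hT, h₂⟩, h₂⟩]
    _ ≤ P (B₁ ∩ A₁) + P (B₂ ∩ A₂) := measure_union_le _ _
    _ = 1/2 * P (B₁ ∪ B₂) := by
        rw [Set.inter_comm, (Indep_iff _ _ P).1 hind _ _ hA₁ hB₁, Set.inter_comm,
          (Indep_iff _ _ P).1 hind _ _ hA₂ hB₂, hε₁, hε₂, measure_union hB (hm' _ hB₂), mul_add]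
    _ ≤ 1/2 := mul_le_of_le_one_right' prob_le_one

lemma measurableSet_tendsto_sum_erase {Ω X : Type*} [NormedAddCommGroup X] [NormedSpace ℝ X]
    (r : ℕ → Ω → ℝ) (x : ℕ → X) (n : ℕ) (c : X) :
    MeasurableSet[⨆ k ∈ ({n}ᶜ : Set ℕ), MeasurableSpace.comap (r k) inferInstance]
      {ω | Tendsto (fun N => ∑ k ∈ (range N).erase n, r k ω • x k) atTop (𝓝 c)} := by
  let : MeasurableSpace Ω := ⨆ k ∈ ({n}ᶜ : Set ℕ), MeasurableSpace.comap (r k) inferInstance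
  have hg : Measurable fun ω k => if k = n then 0 else r k ω := by
    refine measurable_pi_iff.2 fun k => ?_
    by_cases hk : k = n
    · simp only [hk, if_true, measurable_const]
    · simp only [hk, if_false]
      exact measurable_iff_comap_le.2 (le_biSup (fun k => MeasurableSpace.comap (r k) _) hk)
  convert measurableSet_tendsto_comp_of_continuous hg (F := fun N v => ∑ k ∈ (range N).erase n,
    v k • x k) (fun N => continuous_finsetSum _ fun k _ => (continuous_apply k).smul
      continuous_const) c using 6 with ω N k hk
  simp [ne_of_mem_erase hk]

theorem IsRademacherSeq.measure_tendsto_sum_eq_zero_le_half {Ω X : Type*} [MeasurableSpace Ω]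
    {P : Measure Ω} [IsProbabilityMeasure P] {r : ℕ → Ω → ℝ} (hr : IsRademacherSeq P r)
    [NormedAddCommGroup X] [NormedSpace ℝ X] {x : ℕ → X} {n : ℕ} (hxn : x n ≠ 0) :
    P {ω | Tendsto (fun N => ∑ k ∈ range N, r k ω • x k) atTop (𝓝 0)} ≤ 1/2 := by
  obtain ⟨hmeas, hind, hval⟩ := hr
  have : IsAddTorsionFree X := .of_isTorsionFree ℝ X
  refine measure_le_half_of_indep_sign (iSup₂_le fun k _ => (hmeas k).comap_le) (hmeas n)
    (hind.indep_comap_biSup_compl_singleton hmeas n) (hval n).1 (hval n).2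
    (measurableSet_tendsto_sum_erase r x n (-x n)) (measurableSet_tendsto_sum_erase r x n (x n))
    (Set.disjoint_left.2 fun ω h₁ h₂ => hxn (neg_eq_self.1 (tendsto_nhds_unique h₁ h₂))) ?_ ?_
  · rintro ω ⟨hT, h₁ : r n ω = 1⟩
    simpa [h₁] using hT.sum_range_erase n
  · rintro ω ⟨hT, h₂ : r n ω = -1⟩
    simpa [h₂] using hT.sum_range_erase n

theorem IsRademacherSeq.measure_eq_zero_le_half {Ω X : Type*} [MeasurableSpace Ω]
    {P : Measure Ω} [IsProbabilityMeasure P] {r : ℕ → Ω → ℝ} (hr : IsRademacherSeq P r)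
    [NormedAddCommGroup X] [NormedSpace ℝ X] {x : ℕ → X} {η : Ω → X}
    (hη : ∀ᵐ ω ∂P, HasSum (fun n => r n ω • x n) (η ω)) (hne : ¬ η =ᵐ[P] 0) :
    P {ω | η ω = 0} ≤ 1/2 := by
  obtain ⟨n, hxn⟩ : ∃ n, x n ≠ 0 := by
    by_contra! hx
    exact hne (hη.mono fun ω hω => hω.unique (by simp [hx]))
  refine (measure_mono_ae (hη.mono fun ω hω h0 => ?_)).trans
    (hr.measure_tendsto_sum_eq_zero_le_half hxn)
  exact (h0 ▸ hω).tendsto_sum_nat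

lemma Real.eulerMascheroniConstant_lt_two_sub_two_mul_log_two :
    eulerMascheroniConstant < 2 - 2 * log 2 := by
  have hlog : log 16 = 4 * log 2 := by
    rw [show (16 : ℝ) = 2 ^ 4 by norm_num, log_pow]; norm_num
  have hH : (harmonic 16 : ℝ) < 2 + 2 * log 2 := by
    norm_num [harmonic, Finset.sum_range_succ]
    linarith [log_two_gt_d9]
  have := eulerMascheroniConstant_lt_eulerMascheroniSeq' 16
  rw [eulerMascheroniSeq', if_neg (by norm_num), Nat.cast_ofNat, hlog] at this
  linarith

lemma Real.exp_neg_two_add_eulerMascheroniConstant_lt_one_fourth :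
    exp (-2 + eulerMascheroniConstant) < 1/4 := by
  calc exp (-2 + eulerMascheroniConstant) < exp (-log 4) := by
        rw [show (4 : ℝ) = 2 ^ 2 by norm_num, log_pow, Nat.cast_ofNat]
        gcongr
        linarith [eulerMascheroniConstant_lt_two_sub_two_mul_log_two]
    _ = 1/4 := by rw [exp_neg, exp_log (by norm_num), one_div]

/-- Vector-valued nonvanishing lemma: if `η = ∑ r_n x_n` converges almost surely in a
real normed space `X` and `η` is not almost surely zero, then
`ℙ(η = 0) ≤ 1 - 2 e^{-2+γ}`. -/
theorem rademacher_sum_zero_prob_le_vector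
    {Ω : Type*} [MeasurableSpace Ω] (P : Measure Ω) [IsProbabilityMeasure P]
    (r : ℕ → Ω → ℝ) (hr : IsRademacherSeq P r)
    {X : Type*} [NormedAddCommGroup X] [NormedSpace ℝ X]
    (x : ℕ → X) (η : Ω → X)
    (hη : ∀ᵐ ω ∂P, HasSum (fun n => r n ω • x n) (η ω))
    (hne : ¬ (η =ᵐ[P] (fun _ => (0:X)))) :
    P {ω | η ω = 0} ≤
      ENNReal.ofReal (1 - 2 * Real.exp (-2 + Real.eulerMascheroniConstant)) := by
  calc P {ω | η ω = 0} ≤ 1/2 := hr.measure_eq_zero_le_half hη hne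
    _ = ENNReal.ofReal (1/2) := by
        rw [one_div, one_div, ENNReal.ofReal_inv_of_pos two_pos, ENNReal.ofReal_ofNat]
    _ ≤ _ := ENNReal.ofReal_le_ofReal <| by
        linarith [Real.exp_neg_two_add_eulerMascheroniConstant_lt_one_fourth]
end
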